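/- arXiv:1805.03428 — 2 statements merged into one kernel-verified Lean document; each statement's English description precedes it below -/
import Mathlib

section
/- Let I = I(C_{2n+1}) be the edge ideal of an odd cycle, w = x_1⋯x_{2n+1}, m the maximal homogeneous ideal, s = k(n+1)+r with 0 ≤ r ≤ n, and set J = Σ_{i=1}^k I^{s-i(n+1)} w^i. Then I^s ∩ J = w·m·I^{s-(n+1)}. -/
/-!
Everything is graded by total degree. `I^s` lives in degrees `≥ 2s`, while the `i`-th summand
`I^{s-i(n+1)} wⁱ` of `J` is generated in degree `2s - i`. Hence every homogeneous component of
an element of `I^s ∩ J` lies in `∑ mⁱ I^{s-i(n+1)} wⁱ = ∑ (wm)ⁱ I^{s-i(n+1)}`. On the odd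
cycle, `w x_j = (x_j x_{j+1}) (x_{j+2} x_{j+3}) ⋯ (x_{j+2n} x_j)` is a product of `n + 1`
edges, so `wm ⊆ I^{n+1}` and `(wm)ⁱ I^{s-i(n+1)} ⊆ wm I^{s-(n+1)}`. Conversely
`wm I^{s-(n+1)}` lies in `I^{n+1} I^{s-(n+1)} = I^s` and in the summand `i = 1` of `J`.
-/

open MvPolynomial Pointwise

namespace MvPolynomial

variable {σ R : Type*} [CommSemiring R]

def IsGeneratedInDegree (N : Ideal (MvPolynomial σ R)) (D : ℕ) : Prop :=
  ∃ S : Set (MvPolynomial σ R), (∀ p ∈ S, p.IsHomogeneous D) ∧ N = Ideal.span S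

theorem isGeneratedInDegree_span_singleton {p : MvPolynomial σ R} {D : ℕ}
    (hp : p.IsHomogeneous D) : IsGeneratedInDegree (Ideal.span {p}) D :=
  ⟨{p}, by simpa using hp, rfl⟩

namespace IsGeneratedInDegree

variable {N N' : Ideal (MvPolynomial σ R)} {D D' : ℕ}

theorem mul (h : IsGeneratedInDegree N D) (h' : IsGeneratedInDegree N' D') :
    IsGeneratedInDegree (N * N') (D + D') := by
  obtain ⟨S, hS, rfl⟩ := h
  obtain ⟨S', hS', rfl⟩ := h'
  refine ⟨S * S', ?_, Ideal.span_mul_span' S S'⟩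
  rintro _ ⟨p, hp, q, hq, rfl⟩
  exact (hS p hp).mul (hS' q hq)

theorem pow (h : IsGeneratedInDegree N D) : ∀ t : ℕ, IsGeneratedInDegree (N ^ t) (D * t)
  | 0 => by
    simpa [Ideal.one_eq_top] using isGeneratedInDegree_span_singleton (isHomogeneous_one σ R)
  | t + 1 => by
    rw [pow_succ, mul_add, mul_one]
    exact (h.pow t).mul h

end IsGeneratedInDegree

theorem isHomogeneous_prod_X [Fintype σ] :
    (∏ t, X t : MvPolynomial σ R).IsHomogeneous (Fintype.card σ) := by
  simpa using IsHomogeneous.prod Finset.univ X (fun _ => 1) fun i _ => isHomogeneous_X R i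

theorem IsHomogeneous.mem_pow_idealOfVars {p : MvPolynomial σ R} {e j : ℕ}
    (hp : p.IsHomogeneous e) (hj : j ≤ e) : p ∈ idealOfVars σ R ^ j :=
  (mem_pow_idealOfVars_iff j p).mpr fun α hα => by
    rwa [Finsupp.degree_apply, ← hp.degree_eq_sum_deg_support hα]

theorem IsGeneratedInDegree.le_pow_idealOfVars {N : Ideal (MvPolynomial σ R)} {D : ℕ}
    (h : IsGeneratedInDegree N D) : N ≤ idealOfVars σ R ^ D := by
  obtain ⟨S, hS, rfl⟩ := h
  exact Ideal.span_le.mpr fun p hp => (hS p hp).mem_pow_idealOfVars le_rfl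

theorem homogeneousComponent_eq_zero_of_mem_pow_idealOfVars {f : MvPolynomial σ R} {j d : ℕ}
    (hf : f ∈ idealOfVars σ R ^ j) (hd : d < j) : homogeneousComponent d f = 0 := by
  ext α
  rw [coeff_homogeneousComponent, coeff_zero]
  split_ifs with h
  · exact (mem_pow_idealOfVars_iff' j f).mp hf α (h ▸ hd)
  · rfl

section GradedAlgebra

attribute [local instance] MvPolynomial.gradedAlgebra

theorem homogeneousComponent_mul_of_isHomogeneous {r g : MvPolynomial σ R} {D d : ℕ}
    (hg : g.IsHomogeneous D) (hd : D ≤ d) :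
    homogeneousComponent d (r * g) = homogeneousComponent (d - D) r * g := by
  rw [← decomposition.decompose'_apply, ← decomposition.decompose'_apply]
  exact DirectSum.coe_decompose_mul_of_right_mem_of_le _
    ((mem_homogeneousSubmodule D g).mpr hg) hd

end GradedAlgebra

theorem IsGeneratedInDegree.homogeneousComponent_mem {N : Ideal (MvPolynomial σ R)} {D : ℕ}
    (hN : IsGeneratedInDegree N D) {f : MvPolynomial σ R} (hf : f ∈ N) {j d : ℕ}
    (hd : D + j ≤ d) : homogeneousComponent d f ∈ idealOfVars σ R ^ j * N := by
  obtain ⟨S, hS, rfl⟩ := hN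
  obtain ⟨c, hc, rfl⟩ := Submodule.mem_span_set.mp hf
  rw [Finsupp.sum, map_sum]
  refine Ideal.sum_mem _ fun g hg => ?_
  rw [smul_eq_mul, homogeneousComponent_mul_of_isHomogeneous (hS g (hc hg)) (by omega)]
  exact Ideal.mul_mem_mul ((homogeneousComponent_isHomogeneous _ _).mem_pow_idealOfVars
    (by omega)) (Ideal.subset_span (hc hg))

theorem pow_idealOfVars_inf_sum_le {ι : Type*} {s : Finset ι}
    {N : ι → Ideal (MvPolynomial σ R)} {D j : ι → ℕ}
    (hN : ∀ i ∈ s, IsGeneratedInDegree (N i) (D i)) {a : ℕ} (hDj : ∀ i ∈ s, D i + j i ≤ a)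
    {T : Ideal (MvPolynomial σ R)} (hT : ∀ i ∈ s, idealOfVars σ R ^ j i * N i ≤ T) :
    idealOfVars σ R ^ a ⊓ ∑ i ∈ s, N i ≤ T := by
  intro f hf
  obtain ⟨hfa, hfN⟩ := Submodule.mem_inf.mp hf
  rw [Ideal.sum_eq_sup, Finset.sup_eq_iSup, Submodule.mem_iSup_finset_iff_exists_sum] at hfN
  obtain ⟨μ, rfl⟩ := hfN
  rw [← sum_homogeneousComponent (∑ i ∈ s, (μ i : MvPolynomial σ R))]
  refine Ideal.sum_mem _ fun d _ => ?_
  by_cases hd : d < a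
  · rw [homogeneousComponent_eq_zero_of_mem_pow_idealOfVars hfa hd]
    exact T.zero_mem
  rw [map_sum]
  exact Ideal.sum_mem _ fun i hi =>
    hT i hi ((hN i hi).homogeneousComponent_mem (μ i).2 (by have := hDj i hi; omega))

end MvPolynomial

theorem Ideal.pow_mul_pow_sub_le {R : Type*} [CommSemiring R] {A I : Ideal R} {c : ℕ}
    (h : A ≤ I ^ c) {i s : ℕ} (hi : 1 ≤ i) (his : i * c ≤ s) :
    A ^ i * I ^ (s - i * c) ≤ A * I ^ (s - c) := by
  obtain ⟨i, rfl⟩ := Nat.exists_eq_add_of_le' hi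
  calc A ^ (i + 1) * I ^ (s - (i + 1) * c) = A * (A ^ i * I ^ (s - (i + 1) * c)) := by ring
    _ ≤ A * ((I ^ c) ^ i * I ^ (s - (i + 1) * c)) := by gcongr
    _ = A * I ^ (s - c) := by
      rw [← pow_mul, ← pow_add, mul_comm c i]
      congr 2
      rw [add_mul, one_mul] at his ⊢
      omega

theorem Finset.prod_range_two_mul {M : Type*} [CommMonoid M] (f : ℕ → M) (m : ℕ) :
    ∏ x ∈ range (2 * m), f x = ∏ l ∈ range m, (f (2 * l) * f (2 * l + 1)) := by
  induction m with
  | zero => simp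
  | succ m ih => rw [Nat.mul_succ, prod_range_succ, prod_range_succ, prod_range_succ, ih, mul_assoc]

section Cycle

variable (R : Type*) [CommSemiring R]

noncomputable def cycleEdgeIdeal (m : ℕ) [NeZero m] : Ideal (MvPolynomial (Fin m) R) :=
  Ideal.span {f | ∃ i : Fin m, f = X i * X (i + 1)}

theorem isGeneratedInDegree_cycleEdgeIdeal (m : ℕ) [NeZero m] :
    IsGeneratedInDegree (cycleEdgeIdeal R m) 2 := by
  refine ⟨_, ?_, rfl⟩
  rintro _ ⟨i, rfl⟩
  exact (isHomogeneous_X R i).mul (isHomogeneous_X R (i + 1))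

variable {R}

open Fin.NatCast in
theorem X_mul_prod_X_mem_cycleEdgeIdeal_pow (n : ℕ) (j : Fin (2 * n + 1)) :
    (∏ t, X t) * X j ∈ cycleEdgeIdeal R (2 * n + 1) ^ (n + 1) := by
  set x : ℕ → MvPolynomial (Fin (2 * n + 1)) R := fun l => X (j + l)
  have hwalk : (∏ t, X t) * X j = ∏ l ∈ Finset.range (n + 1), (x (2 * l) * x (2 * l + 1)) :=
    calc (∏ t, X t) * X j = (∏ l ∈ Finset.range (2 * n + 1), x l) * x (2 * n + 1) := by
          rw [← Fin.prod_univ_eq_prod_range]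
          congr 1
          · simpa [x] using (Equiv.prod_comp (Equiv.addLeft j) X).symm
          · simp [x]
      _ = ∏ l ∈ Finset.range (2 * (n + 1)), x l := (Finset.prod_range_succ x _).symm
      _ = _ := Finset.prod_range_two_mul x (n + 1)
  have hedges := Ideal.prod_mem_prod (s := Finset.range (n + 1))
    (I := fun _ => cycleEdgeIdeal R (2 * n + 1)) (x := fun l => x (2 * l) * x (2 * l + 1))
    fun l _ => Ideal.subset_span
      ⟨j + (2 * l : ℕ), by simp only [x, Nat.cast_add, Nat.cast_one, add_assoc]⟩
  rwa [Finset.prod_const, Finset.card_range, ← hwalk] at hedges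

theorem span_prod_X_mul_idealOfVars_le (n : ℕ) :
    Ideal.span {∏ t, (X t : MvPolynomial (Fin (2 * n + 1)) R)} *
        idealOfVars (Fin (2 * n + 1)) R ≤ cycleEdgeIdeal R (2 * n + 1) ^ (n + 1) := by
  rw [Ideal.span_mul_span', Ideal.span_le]
  rintro _ ⟨_, rfl, _, ⟨j, rfl⟩, rfl⟩
  exact X_mul_prod_X_mem_cycleEdgeIdeal_pow n j

theorem span_prod_X_mul_idealOfVars_mul_pow_le {n s : ℕ} (hs : n + 1 ≤ s) :
    Ideal.span {∏ t, X t} * idealOfVars (Fin (2 * n + 1)) R *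
        cycleEdgeIdeal R (2 * n + 1) ^ (s - (n + 1)) ≤ cycleEdgeIdeal R (2 * n + 1) ^ s :=
  calc _ ≤ cycleEdgeIdeal R _ ^ (n + 1) * cycleEdgeIdeal R _ ^ (s - (n + 1)) := by
        gcongr; exact span_prod_X_mul_idealOfVars_le n
    _ = cycleEdgeIdeal R _ ^ s := by rw [← pow_add, Nat.add_sub_cancel' hs]

theorem cycleEdgeIdeal_pow_inf_sum_le {n s : ℕ} {u : Finset ℕ}
    (hu : ∀ i ∈ u, 1 ≤ i ∧ i * (n + 1) ≤ s) :
    cycleEdgeIdeal R (2 * n + 1) ^ s ⊓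
        ∑ i ∈ u, cycleEdgeIdeal R _ ^ (s - i * (n + 1)) * Ideal.span {(∏ t, X t) ^ i} ≤
      Ideal.span {∏ t, X t} * idealOfVars (Fin (2 * n + 1)) R *
        cycleEdgeIdeal R (2 * n + 1) ^ (s - (n + 1)) := by
  have hI := isGeneratedInDegree_cycleEdgeIdeal R (2 * n + 1)
  refine (inf_le_inf_right _ (hI.pow s).le_pow_idealOfVars).trans
    (pow_idealOfVars_inf_sum_le (j := id)
      (D := fun i => 2 * (s - i * (n + 1)) + Fintype.card (Fin (2 * n + 1)) * i)
      (fun i _ => ?_) (fun i hi => ?_) fun i hi => ?_)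
  · rw [← Ideal.span_singleton_pow]
    exact (hI.pow _).mul ((isGeneratedInDegree_span_singleton isHomogeneous_prod_X).pow i)
  · have his := (hu i hi).2
    have hdeg : (2 * n + 1) * i + i = 2 * (i * (n + 1)) := by ring
    simp only [Fintype.card_fin, id]
    omega
  · rw [← Ideal.span_singleton_pow]
    calc _ = (Ideal.span {∏ t, X t} * idealOfVars _ R) ^ i *
          cycleEdgeIdeal R _ ^ (s - i * (n + 1)) := by rw [mul_pow, id]; ring
      _ ≤ _ := Ideal.pow_mul_pow_sub_le (span_prod_X_mul_idealOfVars_le n) (hu i hi).1 (hu i hi).2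

end Cycle

theorem pow_inf_J_eq_general {K : Type*} [Field K] (n : ℕ)
    (I : Ideal (MvPolynomial (Fin (2 * n + 1)) K))
    (hI : I = Ideal.span {f | ∃ i : Fin (2 * n + 1), f = X i * X (i + 1)})
    (s k r : ℕ) (hk : 1 ≤ k) (hs : s = k * (n + 1) + r) :
    I ^ s ⊓ (∑ i ∈ Finset.Icc 1 k, I ^ (s - i * (n + 1)) * Ideal.span {(∏ t, X t) ^ i})
      = Ideal.span {∏ t, X t} * Ideal.span (Set.range X) * I ^ (s - (n + 1)) := by
  change I = cycleEdgeIdeal K (2 * n + 1) at hI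
  subst hI
  have hIcc : ∀ i ∈ Finset.Icc 1 k, 1 ≤ i ∧ i * (n + 1) ≤ s := fun i hi => by
    have := Nat.mul_le_mul_right (n + 1) (Finset.mem_Icc.mp hi).2
    exact ⟨(Finset.mem_Icc.mp hi).1, by omega⟩
  have h1 : 1 ∈ Finset.Icc 1 k := Finset.mem_Icc.mpr ⟨le_rfl, hk⟩
  refine le_antisymm (cycleEdgeIdeal_pow_inf_sum_le hIcc)
    (le_inf (span_prod_X_mul_idealOfVars_mul_pow_le (by simpa using (hIcc 1 h1).2)) ?_)
  refine le_trans ?_ (Finset.single_le_sum (fun _ _ => zero_le) h1)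
  rw [one_mul, pow_one, mul_comm (cycleEdgeIdeal K _ ^ _)]
  exact Ideal.mul_mono_left Ideal.mul_le_left

theorem pow_inf_J_eq {K : Type*} [Field K] (n : ℕ) (hn : 1 ≤ n)
    (I : Ideal (MvPolynomial (Fin (2 * n + 1)) K))
    (hI : I = Ideal.span {f | ∃ i : Fin (2 * n + 1), f = X i * X (i + 1)})
    (s k r : ℕ) (hk : 1 ≤ k) (hs : s = k * (n + 1) + r) (hr : r ≤ n) :
    I ^ s ⊓ (∑ i ∈ Finset.Icc 1 k, I ^ (s - i * (n + 1)) * Ideal.span {(∏ t, X t) ^ i})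
      = Ideal.span {∏ t, X t} * Ideal.span (Set.range X) * I ^ (s - (n + 1)) :=
  pow_inf_J_eq_general n I hI s k r hk hs
end

section
/- Let G be a unicyclic graph with unique cycle C_{2n+1} = (x_1,...,x_{2n+1}) and edge ideal I = I(G). Then I^(n+1) = I^{n+1} + (x_1⋯x_{2n+1}). -/
/-!
For a minimal vertex cover `C` of `G`, the prime `P_C = (x_v : v ∈ C)` is an associated prime of
`I(G)`: it is the annihilator of the class of `∏_{v ∉ C} x_v`. As `P_C ^ k` is spanned by the
monomials of degree at least `k` in the variables of `C`, every monomial `x^μ` occurring in an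
element of `I^(k)` has degree at least `k` on every vertex cover of `G`. If `x^μ` misses a vertex of
the odd cycle, the edges of `G` inside the support of `μ` form a forest, and a König-type induction
that splits off one leaf edge at a time puts `x^μ` into `I^k`; otherwise `x^μ` is a multiple of
`x_1 ⋯ x_{2n+1}`. Conversely, every associated prime contains `I` and hence, being prime, at least
`n + 1` of the variables of the odd cycle.
-/

open MvPolynomial

/-- The edge ideal of a graph. -/
noncomputable def edgeIdeal (K : Type*) [Field K] {V : Type*} (G : SimpleGraph V) :
    Ideal (MvPolynomial V K) :=
  Ideal.span {f | ∃ u v, G.Adj u v ∧ f = X u * X v}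

/-- The `s`-th symbolic power: the intersection of `s`-th powers of the
associated primes of `R/I`. -/
noncomputable def symbolicPower {R : Type*} [CommRing R] (I : Ideal R) (s : ℕ) : Ideal R :=
  ⨅ p ∈ associatedPrimes R (R ⧸ I), p ^ s

/-- `G` has `x 0, x 1, ..., x (2n)` as its unique cycle. -/
def HasUniqueOddCycle {V : Type*} (G : SimpleGraph V) (n : ℕ) (x : Fin (2 * n + 1) → V) : Prop :=
  1 ≤ n ∧ Function.Injective x ∧ (∀ i, G.Adj (x i) (x (i + 1))) ∧
    ∀ (v : V) (c : G.Walk v v), c.IsCycle →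
      {e | e ∈ c.edges} = Set.range (fun i : Fin (2 * n + 1) => s(x i, x (i + 1)))

open Finsupp

lemma add_one_le_card_of_forall_mem_or_add_one_mem {n : ℕ} (S : Finset (Fin (2 * n + 1)))
    (h : ∀ i, i ∈ S ∨ i + 1 ∈ S) : n + 1 ≤ S.card := by
  -- `i ↦ i + 1` injects the complement of `S` into `S`.
  have hcompl : Sᶜ.card ≤ S.card :=
    Finset.card_le_card_of_injOn (· + 1) (fun i hi => (h i).resolve_left (Finset.mem_compl.mp hi))
      fun i _ j _ hij => add_right_cancel hij
  have htotal : S.card + Sᶜ.card = 2 * n + 1 := by simp [Finset.card_add_card_compl]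
  omega

lemma Ideal.IsPrime.prod_mem_pow_of_mul_add_one_mem {R : Type*} [CommRing R] {p : Ideal R}
    (hp : p.IsPrime) {n : ℕ} (y : Fin (2 * n + 1) → R) (h : ∀ i, y i * y (i + 1) ∈ p) :
    ∏ i, y i ∈ p ^ (n + 1) := by
  classical
  set S := Finset.univ.filter fun i => y i ∈ p
  have hS : n + 1 ≤ S.card := add_one_le_card_of_forall_mem_or_add_one_mem S fun i => by
    simpa [S] using hp.mem_or_mem (h i)
  have hSmem : ∏ i ∈ S, y i ∈ p ^ S.card := by
    simpa using Ideal.prod_mem_prod (I := fun _ => p) fun i hi => (Finset.mem_filter.mp hi).2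
  rw [← Finset.prod_mul_prod_compl S]
  exact Ideal.mul_mem_right _ _ (Ideal.pow_le_pow_right hS hSmem)

lemma le_of_mem_associatedPrimes_quotient {R : Type*} [CommRing R] {I p : Ideal R}
    (hp : p ∈ associatedPrimes R (R ⧸ I)) : I ≤ p := by
  simpa [Submodule.annihilator_top, Ideal.annihilator_quotient] using
    IsAssociatedPrime.annihilator_le hp

section Weight
variable {V : Type*} {C D : Set V} {μ ν : V →₀ ℕ}

lemma weight_indicator_mono (h : ∀ v ∈ C, μ v ≠ 0 → v ∈ D) :
    weight (C.indicator 1) μ ≤ weight (D.indicator 1 : V → ℕ) μ := by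
  simp only [weight_apply, Finsupp.sum]
  refine Finset.sum_le_sum fun v hv => ?_
  by_cases hvC : v ∈ C
  · simp [Set.indicator_of_mem hvC, Set.indicator_of_mem (h v hvC (mem_support_iff.mp hv))]
  · simp [Set.indicator_of_notMem hvC]

lemma weight_mono (w : V → ℕ) (h : ν ≤ μ) : weight w ν ≤ weight w μ := by
  rw [← tsub_add_cancel_of_le h, map_add]
  exact Nat.le_add_left _ _

lemma weight_indicator_eq_sdiff_add {u : V} (hu : u ∈ C) (μ : V →₀ ℕ) :
    weight (C.indicator 1) μ = weight ((C \ {u}).indicator 1) μ + μ u := by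
  classical
  have hsplit : (C.indicator 1 : V → ℕ) = (C \ {u}).indicator 1 + Pi.single u 1 := by
    ext v
    by_cases hv : v = u
    · subst hv; simp [hu]
    · by_cases hvC : v ∈ C <;> simp [Set.indicator, hv, hvC]
  rw [hsplit, ← weight_single_one_apply u μ]
  simp only [weight_apply, ← Finsupp.sum_add, Pi.add_apply, smul_add]

end Weight

section VariableIdeal
variable {R V : Type*} [CommRing R] {C : Set V}

lemma isPrime_span_X_image [IsDomain R] (C : Set V) :
    (Ideal.span (X '' C : Set (MvPolynomial V R))).IsPrime := by
  classical
  set P := Ideal.span (X '' C : Set (MvPolynomial V R))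
  -- `φ` kills the variables of `C` and is the identity modulo `P`, so its kernel is `P`.
  set φ : MvPolynomial V R →ₐ[R] MvPolynomial V R := aeval fun v => if v ∈ C then 0 else X v
  have hφ : (Ideal.Quotient.mkₐ R P).comp φ = Ideal.Quotient.mkₐ R P := by
    refine algHom_ext fun v => ?_
    by_cases hv : v ∈ C
    · simp only [AlgHom.comp_apply, φ, aeval_X, if_pos hv, map_zero]
      exact (Ideal.Quotient.eq_zero_iff_mem.mpr
        (Ideal.subset_span (Set.mem_image_of_mem X hv))).symm
    · simp [φ, hv]
  suffices RingHom.ker φ = P from this ▸ RingHom.ker_isPrime _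
  refine le_antisymm (fun f hf => ?_) (Ideal.span_le.mpr ?_)
  · rw [← Ideal.Quotient.eq_zero_iff_mem, ← Ideal.Quotient.mkₐ_eq_mk R, ← hφ,
      AlgHom.comp_apply, RingHom.mem_ker.mp hf, map_zero]
  · rintro _ ⟨c, hc, rfl⟩
    simp [φ, hc]

lemma span_X_image_pow_le (C : Set V) (k : ℕ) :
    Ideal.span (X '' C) ^ k ≤ Ideal.span ((fun μ => monomial μ (1 : R)) ''
      {μ | k ≤ weight (C.indicator 1) μ}) := by
  induction k with
  | zero =>
    rw [pow_zero, Ideal.one_eq_top, top_le_iff, Ideal.eq_top_iff_one]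
    exact Ideal.subset_span ⟨0, Nat.zero_le _, rfl⟩
  | succ k ih =>
    rw [pow_succ]
    refine (Ideal.mul_mono_left ih).trans ?_
    rw [Ideal.span_mul_span, Ideal.span_le]
    rintro _ ⟨_, ⟨μ, hμ, rfl⟩, _, ⟨c, hc, rfl⟩, rfl⟩
    refine Ideal.subset_span ⟨μ + single c 1, ?_, by simp [X, monomial_mul]⟩
    simp only [Set.mem_ofPred_eq, map_add, weight_single, Set.indicator_of_mem hc, Pi.one_apply,
      smul_eq_mul] at hμ ⊢
    omega

lemma le_weight_of_mem_span_X_image_pow {k : ℕ} {f : MvPolynomial V R}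
    (hf : f ∈ Ideal.span (X '' C) ^ k) {μ : V →₀ ℕ} (hμ : μ ∈ f.support) :
    k ≤ weight (C.indicator 1) μ := by
  obtain ⟨ν, hν, hνμ⟩ := mem_ideal_span_monomial_image.mp (span_X_image_pow_le C k hf) μ hμ
  exact hν.trans (weight_mono _ hνμ)

lemma monomial_mem_span_prod_X_of_injective {ι : Type*} [Fintype ι] {x : ι → V}
    (hx : Function.Injective x) {μ : V →₀ ℕ} (hμ : ∀ i, μ (x i) ≠ 0) (a : R) :
    monomial μ a ∈ Ideal.span {∏ i, X (x i)} := by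
  classical
  have hle : ∑ i, single (x i) 1 ≤ μ := fun w => by
    simp only [Finset.sum_apply', Finsupp.single_apply]
    rcases em (w ∈ Set.range x) with ⟨i, rfl⟩ | hw
    · simpa [hx.eq_iff] using Nat.one_le_iff_ne_zero.mpr (hμ i)
    · simp only [Set.mem_range, not_exists] at hw
      simp [hw]
  rw [Ideal.mem_span_singleton', ← tsub_add_cancel_of_le hle]
  refine ⟨monomial (μ - ∑ i, single (x i) 1) a, ?_⟩
  simp only [X]
  rw [← monomial_sum_one, monomial_mul, mul_one]

end VariableIdeal

section EdgeIdeal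
variable {K : Type*} [Field K] {V : Type*} {G H : SimpleGraph V} {C : Set V}

lemma edgeIdeal_mono (h : H ≤ G) : edgeIdeal K H ≤ edgeIdeal K G :=
  Ideal.span_mono fun _ ⟨u, v, huv, hf⟩ => ⟨u, v, h huv, hf⟩

lemma edgeIdeal_eq_span_monomial (G : SimpleGraph V) :
    edgeIdeal K G = Ideal.span ((fun μ => monomial μ (1 : K)) ''
      {μ | ∃ u v, G.Adj u v ∧ μ = single u 1 + single v 1}) := by
  refine congrArg Ideal.span (Set.ext fun f => ⟨?_, ?_⟩)
  · rintro ⟨u, v, huv, rfl⟩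
    exact ⟨_, ⟨u, v, huv, rfl⟩, by simp [X, monomial_mul]⟩
  · rintro ⟨_, ⟨u, v, huv, rfl⟩, rfl⟩
    exact ⟨u, v, huv, by simp [X, monomial_mul]⟩

lemma exists_adj_notMem_of_minimal (hC : Minimal G.IsVertexCover C) {c : V} (hc : c ∈ C) :
    ∃ w, G.Adj c w ∧ w ∉ C := by
  by_contra! h
  have hcover : G.IsVertexCover (C \ {c}) := fun u v huv => by
    rcases hC.prop huv with hu | hv
    · by_cases huc : u = c
      · subst huc; exact Or.inr ⟨h v huv, huv.ne.symm⟩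
      · exact Or.inl ⟨hu, huc⟩
    · by_cases hvc : v = c
      · subst hvc; exact Or.inl ⟨h u huv.symm, huv.ne⟩
      · exact Or.inr ⟨hv, hvc⟩
  exact (hC.2 hcover Set.sdiff_subset hc).2 rfl

lemma mul_monomial_mem_edgeIdeal_iff [Finite V] (hC : Minimal G.IsVertexCover C)
    (r : MvPolynomial V K) :
    r * monomial (equivFunOnFinite.symm (Cᶜ.indicator 1)) 1 ∈ edgeIdeal K G ↔
      r ∈ Ideal.span (X '' C) := by
  set ε : V →₀ ℕ := equivFunOnFinite.symm (Cᶜ.indicator 1)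
  constructor
  · intro hr
    rw [mem_ideal_span_X_image]
    intro μ hμ
    have hsupp : μ + ε ∈ (r * monomial ε 1).support := by
      rwa [MvPolynomial.mem_support_iff, coeff_mul_monomial, mul_one,
        ← MvPolynomial.mem_support_iff]
    rw [edgeIdeal_eq_span_monomial, mem_ideal_span_monomial_image] at hr
    obtain ⟨_, ⟨u, v, huv, rfl⟩, hle⟩ := hr _ hsupp
    -- `ε` vanishes on `C`, so the endpoint of the edge lying in `C` occurs in `μ`.
    have hoccurs : ∀ c ∈ C, (single u 1 + single v 1 : V →₀ ℕ) c ≠ 0 → μ c ≠ 0 := by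
      intro c hc hne
      have := hle c
      simp only [Finsupp.coe_add, Pi.add_apply, ε, coe_equivFunOnFinite_symm,
        Set.indicator_of_notMem (Set.notMem_compl_iff.mpr hc)] at this hne
      omega
    rcases hC.prop huv with hu | hv
    · exact ⟨u, hu, hoccurs u hu (by simp)⟩
    · exact ⟨v, hv, hoccurs v hv (by simp)⟩
  · intro hr
    suffices Ideal.span (X '' C) * Ideal.span {monomial ε 1} ≤ edgeIdeal K G from
      this (Ideal.mul_mem_mul hr (Ideal.mem_span_singleton_self _))
    rw [Ideal.span_mul_span, Ideal.span_le]
    rintro _ ⟨_, ⟨c, hc, rfl⟩, _, rfl, rfl⟩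
    obtain ⟨w, hcw, hwC⟩ := exists_adj_notMem_of_minimal hC hc
    have hle : single w 1 ≤ ε := by
      simp [single_le_iff, ε, Set.indicator_of_mem (Set.mem_compl hwC)]
    dsimp only
    rw [← tsub_add_cancel_of_le hle, add_comm, ← mul_one (1 : K), ← monomial_mul, ← mul_assoc]
    exact Ideal.mul_mem_right _ _ (Ideal.subset_span ⟨c, w, hcw, rfl⟩)

lemma span_X_image_mem_associatedPrimes [Finite V] (hC : Minimal G.IsVertexCover C) :
    Ideal.span (X '' C) ∈
      associatedPrimes (MvPolynomial V K) (MvPolynomial V K ⧸ edgeIdeal K G) := by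
  set m := Ideal.Quotient.mk (edgeIdeal K G) (monomial (equivFunOnFinite.symm (Cᶜ.indicator 1)) 1)
  refine ⟨isPrime_span_X_image C, m, ?_⟩
  have hcolon : (⊥ : Submodule (MvPolynomial V K) (MvPolynomial V K ⧸ edgeIdeal K G)).colon {m} =
      Ideal.span (X '' C) := by
    ext r
    rw [Submodule.mem_colon_singleton, Submodule.mem_bot, ← mul_monomial_mem_edgeIdeal_iff hC]
    exact Ideal.Quotient.eq_zero_iff_mem
  rw [hcolon, (isPrime_span_X_image C).radical]

lemma le_weight_of_mem_symbolicPower [Finite V] {k : ℕ} {f : MvPolynomial V K}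
    (hf : f ∈ symbolicPower (edgeIdeal K G) k) {μ : V →₀ ℕ} (hμ : μ ∈ f.support) {D : Set V}
    (hD : G.IsVertexCover D) : k ≤ weight (D.indicator 1) μ := by
  obtain ⟨C, hCD, hC⟩ := exists_minimal_le_of_wellFoundedLT G.IsVertexCover D hD
  have hfC : f ∈ Ideal.span (X '' C) ^ k :=
    (iInf₂_le _ (span_X_image_mem_associatedPrimes hC) : symbolicPower _ k ≤ _) hf
  exact (le_weight_of_mem_span_X_image_pow hfC hμ).trans
    (weight_indicator_mono fun v hv _ => hCD hv)

end EdgeIdeal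

lemma SimpleGraph.IsAcyclic.exists_adj_forall_adj_eq {V : Type*} [Finite V]
    {G : SimpleGraph V} (hG : G.IsAcyclic) {a b : V} (hab : G.Adj a b) :
    ∃ u v, G.Adj u v ∧ ∀ w, G.Adj u w → w = v := by
  have : Nonempty V := ⟨a⟩
  -- The start of a longest path is a leaf.
  obtain ⟨u, _, p, hp, hmax⟩ := SimpleGraph.Walk.exists_isPath_forall_isPath_length_le_length G
  have hnil : ¬p.Nil := fun hnil => by
    have := hmax _ _ _ (SimpleGraph.Walk.IsPath.mk'
      (by simp [hab.ne] : (SimpleGraph.Walk.cons hab .nil).support.Nodup))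
    simp [hnil.length_eq_zero] at this
  refine ⟨u, p.snd, p.adj_snd hnil, fun w huw => hG.eq_snd_of_adj_start hp huw ?_⟩
  by_contra hw
  have := hmax _ _ (p.cons huw.symm) (hp.cons hw)
  simp at this

section SupportGraph
variable {K : Type*} [Field K] {V : Type*} {G H : SimpleGraph V} {μ μ' : V →₀ ℕ} {D : Set V}
  {k : ℕ}

def supportGraph (G : SimpleGraph V) (μ : V →₀ ℕ) : SimpleGraph V where
  Adj p q := G.Adj p q ∧ μ p ≠ 0 ∧ μ q ≠ 0
  symm := ⟨fun _ _ h => ⟨h.1.symm, h.2.2, h.2.1⟩⟩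
  loopless := ⟨fun p h => G.loopless.irrefl p h.1⟩

lemma supportGraph_le (G : SimpleGraph V) (μ : V →₀ ℕ) : supportGraph G μ ≤ G :=
  fun _ _ h => h.1

lemma isAcyclic_supportGraph {n : ℕ} {x : Fin (2 * n + 1) → V} (huni : HasUniqueOddCycle G n x)
    {i : Fin (2 * n + 1)} (hi : μ (x i) = 0) : (supportGraph G μ).IsAcyclic := by
  intro v c hc
  have hedges := huni.2.2.2 v (c.mapLe (supportGraph_le G μ)) (hc.mapLe _)
  have hmem : s(x i, x (i + 1)) ∈ c.edges := by
    have : s(x i, x (i + 1)) ∈ {e | e ∈ (c.mapLe (supportGraph_le G μ)).edges} :=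
      hedges ▸ ⟨i, rfl⟩
    simpa [SimpleGraph.Walk.edges_mapLe_eq_edges] using this
  exact (c.adj_of_mem_edges hmem).2.1 hi

lemma le_weight_of_isVertexCover_supportGraph
    (hcov : ∀ D, G.IsVertexCover D → k ≤ weight (D.indicator 1) μ)
    (hD : (supportGraph G μ).IsVertexCover D) : k ≤ weight (D.indicator 1) μ := by
  refine (hcov (D ∪ {v | μ v = 0}) fun p q hpq => ?_).trans
    (weight_indicator_mono fun v hv hμv => hv.resolve_right hμv)
  by_cases hp : μ p = 0
  · exact Or.inl (Or.inr hp)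
  by_cases hq : μ q = 0
  · exact Or.inr (Or.inr hq)
  exact (hD ⟨hpq, hp, hq⟩).imp Or.inl Or.inl

lemma le_weight_sub_of_leaf
    (hcov : ∀ D, H.IsVertexCover D → k + 1 ≤ weight (D.indicator 1) μ) {u v : V}
    (huv : (supportGraph H μ).Adj u v) (hleaf : ∀ w, (supportGraph H μ).Adj u w → w = v)
    (hμ : μ = μ' + single u 1 + single v 1) (hD : H.IsVertexCover D) :
    k ≤ weight (D.indicator 1) μ' := by
  have hweight : weight (D.indicator 1) μ =
      weight (D.indicator 1) μ' + D.indicator (1 : V → ℕ) u + D.indicator 1 v := by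
    simp [hμ, weight_single]
  have hcovD := hcov D hD
  by_cases hu : u ∈ D <;> by_cases hv : v ∈ D <;>
    simp only [Set.indicator_of_mem, Set.indicator_of_notMem, hu, hv, not_false_eq_true,
      Pi.one_apply] at hweight
  · -- `u` is a leaf of the support graph, so dropping it from `D` leaves a cover of that graph.
    have hD' : (supportGraph H μ).IsVertexCover (D \ {u}) := fun p q hpq => by
      by_cases hpu : p = u
      · subst hpu; exact Or.inr ⟨hleaf q hpq ▸ hv, (hleaf q hpq ▸ huv.1.ne).symm⟩
      by_cases hqu : q = u
      · subst hqu; exact Or.inl ⟨hleaf p hpq.symm ▸ hv, (hleaf p hpq.symm ▸ huv.1.ne).symm⟩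
      exact (hD hpq.1).imp (⟨·, hpu⟩) (⟨·, hqu⟩)
    have := le_weight_of_isVertexCover_supportGraph hcov hD'
    have := weight_indicator_eq_sdiff_add hu μ
    have := Nat.one_le_iff_ne_zero.mpr huv.2.1
    omega
  · omega
  · omega
  · exact absurd (hD huv.1) (by simp [hu, hv])

lemma monomial_mem_edgeIdeal_pow_of_isAcyclic [Finite V] (hH : H.IsAcyclic)
    (hcov : ∀ D, H.IsVertexCover D → k ≤ weight (D.indicator 1) μ) (a : K) :
    monomial μ a ∈ edgeIdeal K H ^ k := by
  induction k generalizing μ with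
  | zero => simp
  | succ k ih =>
    obtain ⟨p, q, hpq⟩ : ∃ p q, (supportGraph H μ).Adj p q := by
      by_contra! h
      simpa [weight_apply] using
        le_weight_of_isVertexCover_supportGraph hcov (D := ∅) fun p q hpq => (h p q hpq).elim
    obtain ⟨u, v, huv, hleaf⟩ := (hH.anti (supportGraph_le H μ)).exists_adj_forall_adj_eq hpq
    have hle : single u 1 + single v 1 ≤ μ := fun w => by
      classical
      obtain ⟨huvH, hu, hv⟩ := huv
      simp only [Finsupp.coe_add, Pi.add_apply, Finsupp.single_apply]
      split_ifs <;> grind [huvH.ne]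
    obtain ⟨μ', rfl⟩ : ∃ μ', μ = μ' + single u 1 + single v 1 :=
      ⟨μ - (single u 1 + single v 1), by rw [add_assoc, tsub_add_cancel_of_le hle]⟩
    have hsplit : monomial (μ' + single u 1 + single v 1) a = monomial μ' a * (X u * X v) := by
      simp [X, monomial_mul, add_assoc]
    rw [hsplit, pow_succ]
    exact Ideal.mul_mem_mul (ih fun D hD => le_weight_sub_of_leaf hcov huv hleaf rfl hD)
      (Ideal.subset_span ⟨u, v, huv.1, rfl⟩)

end SupportGraph

theorem symbolicPower_succ_eq {K : Type*} [Field K] {V : Type*} [Fintype V] (n : ℕ)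
    (G : SimpleGraph V) (x : Fin (2 * n + 1) → V) (huni : HasUniqueOddCycle G n x)
    (I : Ideal (MvPolynomial V K)) (hI : I = edgeIdeal K G) :
    symbolicPower I (n + 1) = I ^ (n + 1) + Ideal.span {∏ i, X (x i)} := by
  subst hI
  refine le_antisymm (fun f hf => ?_) (le_iInf₂ fun p hp => ?_)
  · rw [← support_sum_monomial_coeff f]
    refine Ideal.sum_mem _ fun μ hμ => ?_
    rcases em (∃ i, μ (x i) = 0) with ⟨i, hi⟩ | hcycle
    · refine Ideal.mem_sup_left
        (Ideal.pow_right_mono (edgeIdeal_mono (supportGraph_le G μ)) _ ?_)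
      exact monomial_mem_edgeIdeal_pow_of_isAcyclic (isAcyclic_supportGraph huni hi)
        (fun D hD => le_weight_of_isVertexCover_supportGraph
          (fun D hD => le_weight_of_mem_symbolicPower hf hμ hD) hD) _
    · exact Ideal.mem_sup_right
        (monomial_mem_span_prod_X_of_injective huni.2.1 (by simpa using hcycle) _)
  · have hle := le_of_mem_associatedPrimes_quotient hp
    refine sup_le (Ideal.pow_right_mono hle _) (Ideal.span_le.mpr ?_)
    rintro _ rfl
    exact hp.isPrime.prod_mem_pow_of_mul_add_one_mem _ fun i =>
      hle (Ideal.subset_span ⟨_, _, huni.2.2.1 i, rfl⟩)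
end
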